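/- arXiv:1905.08531 — 4 statements merged into one kernel-verified Lean document; each statement's English description precedes it below -/
import Mathlib

section
/- For 0 ≤ a < b, 0 < c < d, the uniform CDF Unif[a,b] is ε-faster than Unif[c,d] where ε = max{a/c, b/d}, and this is the least such ε. -/
def FasterThan (F G : ℝ → ℝ) (ε : ℝ) : Prop := ∀ t : ℝ, 0 ≤ t → F (ε * t) ≥ G t

noncomputable def unifCDF (a b : ℝ) : ℝ → ℝ := fun t => max 0 (min 1 ((t - a) / (b - a)))

theorem unif_faster_unif (a b c d : ℝ) (ha : 0 ≤ a) (hab : a < b) (hc : 0 < c) (hcd : c < d) :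
    FasterThan (unifCDF a b) (unifCDF c d) (max (a / c) (b / d)) ∧
      ∀ ε' : ℝ, 0 < ε' → ε' < max (a / c) (b / d) →
        ¬ FasterThan (unifCDF a b) (unifCDF c d) ε' := by
  have hba : (0:ℝ) < b - a := by linarith
  have hdc : (0:ℝ) < d - c := by linarith
  have hd : (0:ℝ) < d := hc.trans hcd
  constructor
  · intro t ht
    set ε := max (a / c) (b / d) with hε
    have hεa : a ≤ ε * c := by
      have := le_max_left (a / c) (b / d)
      calc a = (a / c) * c := by field_simp
        _ ≤ ε * c := by nlinarith
    have hεb : b ≤ ε * d := by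
      have := le_max_right (a / c) (b / d)
      calc b = (b / d) * d := by field_simp
        _ ≤ ε * d := by nlinarith
    show max 0 (min 1 ((ε * t - a) / (b - a))) ≥ max 0 (min 1 ((t - c) / (d - c)))
    apply max_le (le_max_left _ _)
    rcases le_or_gt ((t - c) / (d - c)) 0 with h0 | h0
    · exact le_max_of_le_left ((min_le_right _ _).trans h0)
    · have htc : c < t := by
        rcases div_pos_iff.mp h0 with ⟨h1, _⟩ | ⟨_, h2⟩ <;> linarith
      apply le_max_of_le_right
      rcases le_or_gt d t with hdt | hdt
      · -- t ≥ d : εt ≥ b, X ≥ 1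
        have hεt : b ≤ ε * t := by
          have hεpos : 0 < ε := lt_of_lt_of_le (div_pos (by linarith) hd)
            (le_max_right _ _)
          nlinarith
        have hX : (1:ℝ) ≤ (ε * t - a) / (b - a) := by
          rw [le_div_iff₀ hba]; linarith
        calc min 1 ((t - c) / (d - c)) ≤ 1 := min_le_left _ _
          _ ≤ min 1 ((ε * t - a) / (b - a)) := le_min le_rfl hX
      · -- c < t < d : X ≥ Y
        have hXY : (t - c) / (d - c) ≤ (ε * t - a) / (b - a) := by
          rw [div_le_div_iff₀ hdc hba]
          nlinarith [mul_nonneg (by linarith : (0:ℝ) ≤ d - t) (by linarith : (0:ℝ) ≤ ε * c - a),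
            mul_nonneg (by linarith : (0:ℝ) ≤ t - c) (by linarith : (0:ℝ) ≤ ε * d - b)]
        exact min_le_min le_rfl hXY
  · intro ε' hε' hlt hF
    rcases lt_max_iff.mp hlt with h | h
    · -- ε' < a/c : pick t in (c, min d (a/ε'))
      have ha0 : 0 < a := by
        by_contra hna
        push_neg at hna
        have : a / c ≤ 0 := div_nonpos_iff.mpr (Or.inr ⟨hna, hc.le⟩)
        linarith
      have hca : c < a / ε' := by
        rw [lt_div_iff₀ hε']; nlinarith [(lt_div_iff₀ hc).mp h]
      set t := (c + min d (a / ε')) / 2 with hts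
      have hmin : c < min d (a / ε') := lt_min hcd hca
      have hct : c < t := by simp only [hts]; linarith
      have htd : t < d := by
        have := min_le_left d (a / ε'); simp only [hts]; linarith
      have hta : ε' * t < a := by
        have h1 : t < a / ε' := by
          have := min_le_right d (a / ε'); simp only [hts]; linarith
        have h2 := (lt_div_iff₀ hε').mp h1
        linarith [mul_comm ε' t, mul_comm t ε']
      have := hF t (by linarith)
      simp only [unifCDF] at this
      have hL : max 0 (min 1 ((ε' * t - a) / (b - a))) = 0 := by
        apply max_eq_left
        apply (min_le_right _ _).trans
        exact div_nonpos_iff.mpr (Or.inr ⟨by linarith, by linarith⟩)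
      have hR : 0 < min 1 ((t - c) / (d - c)) :=
        lt_min one_pos (div_pos (by linarith) hdc)
      rw [hL] at this
      have h3 := le_max_right (0:ℝ) (min 1 ((t - c) / (d - c)))
      linarith
    · -- ε' < b/d : take t = d
      have := hF d hd.le
      simp only [unifCDF] at this
      have hR : max 0 (min 1 ((d - c) / (d - c))) = 1 := by
        rw [div_self hdc.ne']; simp
      have hεd : ε' * d < b := (lt_div_iff₀ hd).mp h
      have hX : (ε' * d - a) / (b - a) < 1 := by
        rw [div_lt_one hba]; linarith
      have hL : max 0 (min 1 ((ε' * d - a) / (b - a))) < 1 :=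
        max_lt one_pos ((min_le_right _ _).trans_lt hX)
      rw [hR] at this
      linarith
end

section
/- For b > 0 and θ > 0, the uniform CDF Unif[0,b] is ε-faster than the exponential CDF Exp[θ] where ε = θ·b, and this is the least such ε: for any ε' < θ·b, Unif[0,b] is not ε'-faster than Exp[θ]. -/
noncomputable def expCDF (θ : ℝ) : ℝ → ℝ := fun t => 1 - Real.exp (-θ * t)

theorem unif_zero_faster_exp (b θ : ℝ) (hb : 0 < b) (hθ : 0 < θ) :
    FasterThan (unifCDF 0 b) (expCDF θ) (θ * b) ∧
      ∀ ε' : ℝ, 0 < ε' → ε' < θ * b → ¬ FasterThan (unifCDF 0 b) (expCDF θ) ε' := by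
  constructor
  · intro t ht
    simp only [unifCDF, expCDF, sub_zero]
    have hq : θ * b * t / b = θ * t := by field_simp
    rw [hq]
    have h1 : 1 - Real.exp (-θ * t) ≤ θ * t := by
      have := Real.add_one_le_exp (-(θ * t))
      have : 1 - θ * t ≤ Real.exp (-(θ * t)) := by linarith
      rw [neg_mul]; linarith
    have h2 : 1 - Real.exp (-θ * t) ≤ 1 := by
      have := Real.exp_pos (-θ * t); linarith
    exact le_trans (le_min h2 h1) (le_max_right _ _)
  · intro ε' hε' hlt hF
    set r : ℝ := θ * b / ε' with hr
    have hr1 : 1 < r := (one_lt_div hε').mpr hlt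
    set t : ℝ := Real.log r / θ with ht
    have hu : 0 < Real.log r := Real.log_pos hr1
    have htpos : 0 < t := div_pos hu hθ
    have hkey := hF t (le_of_lt htpos)
    simp only [unifCDF, expCDF, sub_zero, ge_iff_le] at hkey
    set u : ℝ := Real.log r with huu
    have hθt : θ * t = u := by
      rw [ht]; field_simp
    have hexp : Real.exp (-θ * t) = ε' / (θ * b) := by
      rw [neg_mul, hθt, Real.exp_neg, Real.exp_log (by linarith : (0:ℝ) < r), hr]
      rw [inv_div]
    have hεt : ε' * t / b = u * (ε' / (θ * b)) := by
      rw [← hθt]; field_simp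
    -- 1 - e^{-u} > u e^{-u}  since e^u > 1 + u
    have hlt2 : u + 1 < Real.exp u := Real.add_one_lt_exp (ne_of_gt hu)
    have hepos : 0 < Real.exp (-θ * t) := Real.exp_pos _
    have hprod : Real.exp u * Real.exp (-θ * t) = 1 := by
      rw [neg_mul, hθt, ← Real.exp_add]; simp
    have hmain : u * Real.exp (-θ * t) < 1 - Real.exp (-θ * t) := by
      nlinarith [mul_lt_mul_of_pos_right hlt2 hepos]
    have h01 : (0:ℝ) < 1 - Real.exp (-θ * t) := by
      nlinarith [mul_pos hu hepos]
    have hmain2 : ε' * t / b < 1 - Real.exp (-θ * t) := by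
      rw [hεt, ← hexp]; exact hmain
    have : max 0 (min 1 (ε' * t / b)) < 1 - Real.exp (-θ * t) :=
      max_lt h01 (lt_of_le_of_lt (min_le_right _ _) hmain2)
    linarith
end

section
/- The ε-faster-than relation is a congruence with respect to convolution: if probability measures μ₁, μ₂, ν₁, ν₂ on [0,∞) satisfy F_{μ₁} ⊑_ε F_{μ₂} and F_{ν₁} ⊑_ε F_{ν₂}, then F_{μ₁ * ν₁} ⊑_ε F_{μ₂ * ν₂}, where * denotes convolution of measures. -/
open MeasureTheory

/-- Convolution of two measures on ℝ: the law of the sum of independent random variables. -/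
noncomputable def mconv (μ ν : Measure ℝ) : Measure ℝ :=
  Measure.map (fun p : ℝ × ℝ => p.1 + p.2) (μ.prod ν)

/-- CDF of a measure supported on [0,∞): `F_μ t = μ [0,t]`. -/
noncomputable def cdf (μ : Measure ℝ) (t : ℝ) : ℝ := (μ (Set.Icc 0 t)).toReal

lemma meas_eq_of_null_neg (ν : Measure ℝ) (h : ν (Set.Iio 0) = 0) (S T : Set ℝ)
    (h1 : T ⊆ S) (h2 : S ⊆ T ∪ Set.Iio 0) : ν S = ν T :=
  le_antisymm ((measure_mono h2).trans ((measure_union_le _ _).trans (by rw [h, add_zero])))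
    (measure_mono h1)

lemma slice_eq (ν : Measure ℝ) (h : ν (Set.Iio 0) = 0) (x t : ℝ) (hx : 0 ≤ x) :
    ν {y | x + y ∈ Set.Icc 0 t} = ν (Set.Icc 0 (t - x)) := by
  apply meas_eq_of_null_neg ν h
  · intro y hy
    simp only [Set.mem_Icc] at hy
    simp only [Set.mem_setOf_eq, Set.mem_Icc]
    constructor <;> linarith [hy.1, hy.2]
  · intro y hy
    simp only [Set.mem_setOf_eq, Set.mem_Icc] at hy
    by_cases hy0 : y < 0
    · exact Or.inr hy0
    · push_neg at hy0
      exact Or.inl ⟨hy0, by linarith [hy.2]⟩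

lemma slice_eq' (μ : Measure ℝ) (h : μ (Set.Iio 0) = 0) (y t : ℝ) (hy : 0 ≤ y) :
    μ {x | x + y ∈ Set.Icc 0 t} = μ (Set.Icc 0 (t - y)) := by
  have : {x : ℝ | x + y ∈ Set.Icc 0 t} = {x : ℝ | y + x ∈ Set.Icc 0 t} := by
    ext x; simp [add_comm]
  rw [this]
  exact slice_eq μ h y t hy

lemma ae_nonneg (ν : Measure ℝ) (h : ν (Set.Iio 0) = 0) : ∀ᵐ y ∂ν, (0 : ℝ) ≤ y := by
  rw [ae_iff]
  convert h using 2
  ext y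
  simp [not_le]

lemma conv_fst (μ ν : Measure ℝ) [SFinite μ] [SFinite ν]
    (hμ : μ (Set.Iio 0) = 0) (hν : ν (Set.Iio 0) = 0) (t : ℝ) :
    mconv μ ν (Set.Icc 0 t) = ∫⁻ x, ν (Set.Icc 0 (t - x)) ∂μ := by
  rw [mconv, Measure.map_apply (f := fun p : ℝ × ℝ => p.1 + p.2) (measurable_fst.add measurable_snd) measurableSet_Icc,
    Measure.prod_apply (s := (fun p : ℝ × ℝ => p.1 + p.2) ⁻¹' Set.Icc 0 t) ((measurable_fst.add measurable_snd) measurableSet_Icc)]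
  refine lintegral_congr_ae ?_
  filter_upwards [ae_nonneg μ hμ] with x hx
  have : Prod.mk x ⁻¹' ((fun p : ℝ × ℝ => p.1 + p.2) ⁻¹' Set.Icc 0 t)
      = {y | x + y ∈ Set.Icc 0 t} := rfl
  rw [this, slice_eq ν hν x t hx]

lemma conv_snd (μ ν : Measure ℝ) [SFinite μ] [SFinite ν]
    (hμ : μ (Set.Iio 0) = 0) (hν : ν (Set.Iio 0) = 0) (t : ℝ) :
    mconv μ ν (Set.Icc 0 t) = ∫⁻ y, μ (Set.Icc 0 (t - y)) ∂ν := by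
  rw [mconv, Measure.map_apply (f := fun p : ℝ × ℝ => p.1 + p.2) (measurable_fst.add measurable_snd) measurableSet_Icc,
    Measure.prod_apply_symm (s := (fun p : ℝ × ℝ => p.1 + p.2) ⁻¹' Set.Icc 0 t) ((measurable_fst.add measurable_snd) measurableSet_Icc)]
  refine lintegral_congr_ae ?_
  filter_upwards [ae_nonneg ν hν] with y hy
  have : (fun x => (x, y)) ⁻¹' ((fun p : ℝ × ℝ => p.1 + p.2) ⁻¹' Set.Icc 0 t)
      = {x | x + y ∈ Set.Icc 0 t} := rfl
  rw [this, slice_eq' μ hμ y t hy]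

theorem fasterThan_conv (μ₁ μ₂ ν₁ ν₂ : Measure ℝ)
    [IsProbabilityMeasure μ₁] [IsProbabilityMeasure μ₂]
    [IsProbabilityMeasure ν₁] [IsProbabilityMeasure ν₂]
    (hμ₁ : μ₁ (Set.Iio 0) = 0) (hμ₂ : μ₂ (Set.Iio 0) = 0)
    (hν₁ : ν₁ (Set.Iio 0) = 0) (hν₂ : ν₂ (Set.Iio 0) = 0)
    (ε : ℝ) (hε : 0 < ε)
    (hμ : ∀ t : ℝ, 0 ≤ t → cdf μ₁ (ε * t) ≥ cdf μ₂ t)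
    (hν : ∀ t : ℝ, 0 ≤ t → cdf ν₁ (ε * t) ≥ cdf ν₂ t) :
    ∀ t : ℝ, 0 ≤ t → cdf (mconv μ₁ ν₁) (ε * t) ≥ cdf (mconv μ₂ ν₂) t := by
  -- ENNReal versions of the hypotheses, for all real arguments
  have h2 : ∀ s : ℝ, μ₂ (Set.Icc 0 s) ≤ μ₁ (Set.Icc 0 (ε * s)) := by
    intro s
    rcases le_or_gt 0 s with hs | hs
    · exact (ENNReal.toReal_le_toReal (measure_ne_top _ _) (measure_ne_top _ _)).mp (hμ s hs)
    · rw [Set.Icc_eq_empty (not_le.mpr hs), measure_empty]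
      exact zero_le
  have h2ν : ∀ s : ℝ, ν₂ (Set.Icc 0 s) ≤ ν₁ (Set.Icc 0 (ε * s)) := by
    intro s
    rcases le_or_gt 0 s with hs | hs
    · exact (ENNReal.toReal_le_toReal (measure_ne_top _ _) (measure_ne_top _ _)).mp (hν s hs)
    · rw [Set.Icc_eq_empty (not_le.mpr hs), measure_empty]
      exact zero_le
  intro t _
  set ν₂' : Measure ℝ := Measure.map (fun y => ε * y) ν₂ with hν₂'
  haveI : IsProbabilityMeasure ν₂' := Measure.isProbabilityMeasure_map (measurable_const_mul ε).aemeasurable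
  have hmap : ∀ S : Set ℝ, MeasurableSet S → ν₂' S = ν₂ ((fun y => ε * y) ⁻¹' S) := fun S hS =>
    Measure.map_apply (measurable_const_mul ε) hS
  have hν₂'0 : ν₂' (Set.Iio 0) = 0 := by
    rw [hmap _ measurableSet_Iio]
    have : (fun y => ε * y) ⁻¹' Set.Iio 0 = Set.Iio 0 := by
      ext y
      simp only [Set.mem_preimage, Set.mem_Iio]
      constructor
      · intro h
        by_contra h'
        push_neg at h'
        exact absurd h (not_lt.mpr (mul_nonneg hε.le h'))
      · exact fun h => mul_neg_of_pos_of_neg hε h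
    rw [this, hν₂]
  have hdom : ∀ s : ℝ, ν₂' (Set.Icc 0 s) ≤ ν₁ (Set.Icc 0 s) := by
    intro s
    rw [hmap _ measurableSet_Icc]
    have hpre : (fun y => ε * y) ⁻¹' Set.Icc 0 s = Set.Icc 0 (s / ε) := by
      ext y
      simp only [Set.mem_preimage, Set.mem_Icc]
      constructor
      · rintro ⟨h1, h2⟩
        exact ⟨nonneg_of_mul_nonneg_right h1 hε, (le_div_iff₀' hε).mpr h2⟩
      · rintro ⟨h1, h2⟩
        exact ⟨mul_nonneg hε.le h1, (le_div_iff₀' hε).mp h2⟩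
    rw [hpre]
    have := h2ν (s / ε)
    rwa [mul_div_cancel₀ s hε.ne'] at this
  have gmeas : Measurable fun u : ℝ => μ₁ (Set.Icc 0 (ε * t - u)) := by
    apply Antitone.measurable
    intro u v huv
    exact measure_mono (Set.Icc_subset_Icc le_rfl (by linarith))
  have key : mconv μ₂ ν₂ (Set.Icc 0 t) ≤ mconv μ₁ ν₁ (Set.Icc 0 (ε * t)) := by
    calc mconv μ₂ ν₂ (Set.Icc 0 t)
        = ∫⁻ y, μ₂ (Set.Icc 0 (t - y)) ∂ν₂ := conv_snd μ₂ ν₂ hμ₂ hν₂ t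
      _ ≤ ∫⁻ y, μ₁ (Set.Icc 0 (ε * (t - y))) ∂ν₂ := lintegral_mono fun y => h2 (t - y)
      _ = ∫⁻ y, μ₁ (Set.Icc 0 (ε * t - ε * y)) ∂ν₂ := by
          refine lintegral_congr fun y => ?_
          congr 2
          ring
      _ = ∫⁻ u, μ₁ (Set.Icc 0 (ε * t - u)) ∂ν₂' :=
          (lintegral_map gmeas (measurable_const_mul ε)).symm
      _ = mconv μ₁ ν₂' (Set.Icc 0 (ε * t)) := (conv_snd μ₁ ν₂' hμ₁ hν₂'0 (ε * t)).symm
      _ = ∫⁻ x, ν₂' (Set.Icc 0 (ε * t - x)) ∂μ₁ := conv_fst μ₁ ν₂' hμ₁ hν₂'0 (ε * t)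
      _ ≤ ∫⁻ x, ν₁ (Set.Icc 0 (ε * t - x)) ∂μ₁ := lintegral_mono fun x => hdom (ε * t - x)
      _ = mconv μ₁ ν₁ (Set.Icc 0 (ε * t)) := (conv_fst μ₁ ν₁ hμ₁ hν₁ (ε * t)).symm
  haveI : IsProbabilityMeasure (mconv μ₁ ν₁) :=
    Measure.isProbabilityMeasure_map (measurable_fst.add measurable_snd).aemeasurable
  haveI : IsProbabilityMeasure (mconv μ₂ ν₂) :=
    Measure.isProbabilityMeasure_map (measurable_fst.add measurable_snd).aemeasurable
  exact (ENNReal.toReal_le_toReal (measure_ne_top _ _) (measure_ne_top _ _)).mpr key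
end

section
/- With the alternative definition F ⊑'_ε G iff F(ε + t) ≥ G(t) for all t, the relation fails to be a congruence with respect to convolution: taking F_{μ₁} = Unif[2,4], F_{μ₂} = Unif[1,3], F_{ν₁} = Unif[3,4], F_{ν₂} = Unif[2,4], one has F_{μ₁} ⊑'_1 F_{μ₂} and F_{ν₁} ⊑'_1 F_{ν₂}, but F_{μ₁ * ν₁} is not ⊑'_1 F_{μ₂ * ν₂}. -/
open MeasureTheory

/-- The uniform probability measure on `[a,b]`. -/
noncomputable def unifMeasure (a b : ℝ) : Measure ℝ :=
  (ENNReal.ofReal (b - a))⁻¹ • volume.restrict (Set.Icc a b)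

/-- Alternative (additive) faster-than relation: `F (ε + t) ≥ G t` for all `t ≥ 0`. -/
def FasterThan' (F G : ℝ → ℝ) (ε : ℝ) : Prop := ∀ t : ℝ, 0 ≤ t → F (ε + t) ≥ G t

lemma unif_Icc (a b u v : ℝ) :
    unifMeasure a b (Set.Icc u v) =
      (ENNReal.ofReal (b - a))⁻¹ * ENNReal.ofReal (min v b - max u a) := by
  simp [unifMeasure, Measure.restrict_apply, measurableSet_Icc, Set.Icc_inter_Icc,
    Real.volume_Icc]

lemma cdf_unif (a b : ℝ) (ha : 0 ≤ a) (hab : a < b) (t : ℝ) :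
    cdf (unifMeasure a b) t = (b - a)⁻¹ * max (min t b - a) 0 := by
  rw [cdf, unif_Icc, max_eq_right ha, ENNReal.toReal_mul, ENNReal.toReal_inv,
    ENNReal.toReal_ofReal (by linarith), ENNReal.toReal_ofReal']

instance ufin (a b : ℝ) : IsFiniteMeasure (unifMeasure a b) := by
  constructor
  rw [unifMeasure, Measure.smul_apply, Measure.restrict_apply MeasurableSet.univ,
    Set.univ_inter, Real.volume_Icc, smul_eq_mul]
  exact lt_of_le_of_lt (ENNReal.inv_mul_le_one _) ENNReal.one_lt_top

lemma conv_cdf (a b c d : ℝ) (ha : 0 ≤ a) (hab : a < b) (hc : 0 ≤ c) (hcd : c < d) (t : ℝ) :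
    cdf (mconv (unifMeasure a b) (unifMeasure c d)) t
      = (b - a)⁻¹ * ((d - c)⁻¹ * ∫ x in Set.Icc a b, max (min (t - x) d - c) 0) := by
  have hS : MeasurableSet ((fun p : ℝ × ℝ => p.1 + p.2) ⁻¹' Set.Icc 0 t) :=
    (measurable_fst.add measurable_snd) measurableSet_Icc
  rw [cdf, mconv, Measure.map_apply (f := fun p : ℝ × ℝ => p.1 + p.2) (measurable_fst.add measurable_snd) measurableSet_Icc,
    Measure.prod_apply hS]
  have hpre : ∀ x : ℝ, (Prod.mk x ⁻¹' ((fun p : ℝ × ℝ => p.1 + p.2) ⁻¹' Set.Icc 0 t))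
      = Set.Icc (-x) (t - x) := by
    intro x; ext y
    simp only [Set.mem_preimage, Set.mem_Icc]
    constructor <;> intro h <;> exact ⟨by linarith [h.1], by linarith [h.2]⟩
  simp only [hpre, unif_Icc]
  rw [unifMeasure, lintegral_smul_measure]
  rw [lintegral_const_mul' _ _ (by
    simp [ENNReal.inv_ne_top, ENNReal.ofReal_eq_zero]; linarith)]
  have hcong : ∫⁻ x in Set.Icc a b, ENNReal.ofReal (min (t - x) d - max (-x) c)
      = ∫⁻ x in Set.Icc a b, ENNReal.ofReal (max (min (t - x) d - c) 0) := by
    apply setLIntegral_congr_fun measurableSet_Icc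
    intro x hx
    have h1 : max (-x) c = c := max_eq_right (by linarith [hx.1])
    dsimp only
    rw [h1]
    rcases le_total (min (t - x) d - c) 0 with h | h
    · rw [max_eq_right h, ENNReal.ofReal_eq_zero.mpr h, ENNReal.ofReal_zero]
    · rw [max_eq_left h]
  rw [hcong]
  have hg : Continuous fun x : ℝ => max (min (t - x) d - c) 0 :=
    (((continuous_const.sub continuous_id).min continuous_const).sub continuous_const).max
      continuous_const
  rw [← ofReal_integral_eq_lintegral_ofReal (hg.integrableOn_Icc)
    (ae_of_all _ fun x => le_max_right _ _)]
  rw [smul_eq_mul, ENNReal.toReal_mul, ENNReal.toReal_mul, ENNReal.toReal_inv, ENNReal.toReal_inv,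
    ENNReal.toReal_ofReal (by linarith), ENNReal.toReal_ofReal (by linarith),
    ENNReal.toReal_ofReal (setIntegral_nonneg measurableSet_Icc fun x _ => le_max_right _ _)]

lemma int_max (a b c : ℝ) (hac : a ≤ c) (hcb : c ≤ b) :
    ∫ x in Set.Icc a b, max (c - x) 0 = (c - a) ^ 2 / 2 := by
  have hg : Continuous fun x : ℝ => max (c - x) 0 :=
    (continuous_const.sub continuous_id).max continuous_const
  rw [MeasureTheory.integral_Icc_eq_integral_Ioc,
    ← intervalIntegral.integral_of_le (le_trans hac hcb),
    ← intervalIntegral.integral_add_adjacent_intervals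
      (a := a) (b := c) (c := b) (hg.intervalIntegrable a c) (hg.intervalIntegrable c b)]
  have h1 : ∫ x in a..c, max (c - x) 0 = ∫ x in a..c, (c - x) := by
    apply intervalIntegral.integral_congr
    intro x hx
    rw [Set.uIcc_of_le hac] at hx
    exact max_eq_left (by linarith [hx.2])
  have h2 : ∫ x in c..b, max (c - x) 0 = ∫ x in c..b, (0 : ℝ) := by
    apply intervalIntegral.integral_congr
    intro x hx
    rw [Set.uIcc_of_le hcb] at hx
    exact max_eq_right (by linarith [hx.1])
  rw [h1, h2, intervalIntegral.integral_sub intervalIntegrable_const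
    ((continuous_id' : Continuous fun x : ℝ => x).intervalIntegrable a c), integral_id,
    intervalIntegral.integral_const, intervalIntegral.integral_zero]
  simp
  ring

theorem additive_not_congruence_for_conv :
    FasterThan' (cdf (unifMeasure 2 4)) (cdf (unifMeasure 1 3)) 1 ∧
    FasterThan' (cdf (unifMeasure 3 4)) (cdf (unifMeasure 2 4)) 1 ∧
    ¬ FasterThan' (cdf (mconv (unifMeasure 2 4) (unifMeasure 3 4)))
        (cdf (mconv (unifMeasure 1 3) (unifMeasure 2 4))) 1 := by
  refine ⟨?_, ?_, ?_⟩
  · intro t ht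
    rw [cdf_unif 2 4 (by norm_num) (by norm_num), cdf_unif 1 3 (by norm_num) (by norm_num)]
    rcases le_total t 3 with h | h <;>
      simp [min_def, max_def] <;> split_ifs <;> norm_num <;> linarith
  · intro t ht
    rw [cdf_unif 3 4 (by norm_num) (by norm_num), cdf_unif 2 4 (by norm_num) (by norm_num)]
    rcases le_total t 4 with h | h <;>
      simp [min_def, max_def] <;> split_ifs <;> norm_num <;> linarith
  · intro h
    have := h (9 / 2) (by norm_num)
    rw [conv_cdf 2 4 3 4 (by norm_num) (by norm_num) (by norm_num) (by norm_num),
      conv_cdf 1 3 2 4 (by norm_num) (by norm_num) (by norm_num) (by norm_num)] at this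
    have e1 : ∫ x in Set.Icc (2:ℝ) 4, max (min (1 + 9 / 2 - x) 4 - 3) 0
        = ∫ x in Set.Icc (2:ℝ) 4, max (5 / 2 - x) 0 := by
      apply setIntegral_congr_fun measurableSet_Icc
      intro x hx
      have : min (1 + 9 / 2 - x) 4 = 1 + 9 / 2 - x := min_eq_left (by linarith [hx.1])
      dsimp only; rw [this]; ring_nf
    have e2 : ∫ x in Set.Icc (1:ℝ) 3, max (min (9 / 2 - x) 4 - 2) 0
        = ∫ x in Set.Icc (1:ℝ) 3, max (5 / 2 - x) 0 := by
      apply setIntegral_congr_fun measurableSet_Icc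
      intro x hx
      have : min (9 / 2 - x) 4 = 9 / 2 - x := min_eq_left (by linarith [hx.1])
      dsimp only; rw [this]; ring_nf
    rw [e1, e2, int_max 2 4 (5 / 2) (by norm_num) (by norm_num),
      int_max 1 3 (5 / 2) (by norm_num) (by norm_num)] at this
    norm_num at this
end
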